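/- Let V = (ℂⁿ)^{⊕m} with coordinates x'_{i,j} (1 ≤ i ≤ n, 1 ≤ j ≤ m). In the Weyl algebra D(V), define M_{j,k} = Σ_{i=1}^n x'_{i,j} x'_{i,k}, Δ_{j,k} = Σ_{i=1}^n (∂/∂x'_{i,j})(∂/∂x'_{i,k}), and E_{j,k} = Σ_{i=1}^n x'_{i,j} ∂/∂x'_{i,k}. Then the map τ': 𝔰𝔭_{2m} → D(V) sending e_{j,k+m} + e_{k,j+m} ↦ M_{j,k}, -e_{j+m,k} - e_{k+m,j} ↦ Δ_{j,k}, and e_{j,k} - e_{m+k,m+j} ↦ E_{j,k} + (n/2)δ_{j,k} is a Lie algebra homomorphism. -/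

import Mathlib

/-!
The operators `p_{(a,i)}`, equal to `x'_{i,j}` for `a = inl j` and to `-∂/∂x'_{i,j}` for
`a = inr j`, satisfy the canonical commutation relations `⁅p_α, p_β⁆ = ω_{αβ}` with
`ω = diag(J, …, J)`, `J` the form defining `𝔰𝔭_{2m}`. For any such family in an associative
algebra, the quadratic elements `Q(S) = ∑ S_{αβ} p_α p_β` with `S` symmetric satisfy
`⁅Q(S), p_γ⁆ = 2 ∑ (Sω)_{αγ} p_α`, hence `⁅Q(S), Q(S')⁆ = 2 Q(SωS' - S'ωS)`.
Since `ξ ↦ ξωᵀ` maps `𝔰𝔭(ω)` to symmetric matrices and `(ξωᵀ) ω (ηωᵀ) = ξηωᵀ`, the map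
`ξ ↦ ½ Q(ξωᵀ)` is a Lie homomorphism on `𝔰𝔭(ω)`; `τ'` is its composite with
`ξ ↦ diag(ξ, …, ξ)`. Its values on the basis follow from `∂x = x∂ + δ`, which produces the
shift `(n/2)δ_{j,k}`.
-/

noncomputable section

open Matrix

attribute [local instance] LieRing.ofAssociativeRing

abbrev WP (n m : ℕ) := MvPolynomial (Fin n × Fin m) ℂ

def xOp {n m : ℕ} (i : Fin n) (j : Fin m) : Module.End ℂ (WP n m) :=
  LinearMap.mulLeft ℂ (MvPolynomial.X (i, j))

def dOp {n m : ℕ} (i : Fin n) (j : Fin m) : Module.End ℂ (WP n m) :=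
  (MvPolynomial.pderiv (i, j)).toLinearMap

/-- `M_{j,k} = Σᵢ x'_{i,j} x'_{i,k}`. -/
def Mop (n m : ℕ) (j k : Fin m) : Module.End ℂ (WP n m) :=
  ∑ i : Fin n, xOp i j * xOp i k

/-- `Δ_{j,k} = Σᵢ (∂/∂x'_{i,j})(∂/∂x'_{i,k})`. -/
def Δop (n m : ℕ) (j k : Fin m) : Module.End ℂ (WP n m) :=
  ∑ i : Fin n, dOp i j * dOp i k

/-- `E_{j,k} = Σᵢ x'_{i,j} ∂/∂x'_{i,k}`. -/
def Eop (n m : ℕ) (j k : Fin m) : Module.End ℂ (WP n m) :=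
  ∑ i : Fin n, xOp i j * dOp i k

/-- `𝔰𝔭_{2m}`, realized as block matrices `[[A,B],[C,-Aᵀ]]` with `B`, `C` symmetric, i.e. the
matrices `X` with `Xᵀ J + J X = 0` for `J = [[0,1],[-1,0]]`. -/
abbrev spLie (m : ℕ) : LieSubalgebra ℂ (Matrix (Fin m ⊕ Fin m) (Fin m ⊕ Fin m) ℂ) :=
  skewAdjointMatricesLieSubalgebra (Matrix.fromBlocks 0 1 (-1) 0)


namespace Ring

variable {A : Type*} [Ring A]

theorem mul_lie (a b c : A) : ⁅a * b, c⁆ = a * ⁅b, c⁆ + ⁅a, c⁆ * b := by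
  simp only [Ring.lie_def]; noncomm_ring

theorem lie_mul (a b c : A) : ⁅a, b * c⁆ = ⁅a, b⁆ * c + b * ⁅a, c⁆ := by
  simp only [Ring.lie_def]; noncomm_ring

end Ring

namespace WeylAlgebra

variable {R A ι : Type*} [CommRing R] [Ring A] [Algebra R A] [Fintype ι]

section Quadratic

variable (p : ι → A)

def quadratic : Matrix ι ι R →ₗ[R] A where
  toFun S := ∑ a, ∑ b, S a b • (p a * p b)
  map_add' S T := by simp only [Matrix.add_apply, add_smul, Finset.sum_add_distrib]
  map_smul' r S := by
    simp only [Matrix.smul_apply, smul_eq_mul, mul_smul, Finset.smul_sum, RingHom.id_apply]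

theorem quadratic_apply (S : Matrix ι ι R) :
    quadratic p S = ∑ a, ∑ b, S a b • (p a * p b) :=
  rfl

theorem quadratic_mul (M N : Matrix ι ι R) :
    quadratic p (M * N) = ∑ c, ∑ d, N c d • ((∑ a, M a c • p a) * p d) := by
  simp only [quadratic_apply, Matrix.mul_apply, Finset.sum_mul, Finset.smul_sum,
    Finset.sum_smul, smul_mul_assoc, smul_smul]
  conv_rhs => enter [2, c]; rw [Finset.sum_comm]
  conv_rhs => rw [Finset.sum_comm]
  exact Fintype.sum_congr _ _ fun a => Finset.sum_comm.trans
    (Fintype.sum_congr _ _ fun c => Fintype.sum_congr _ _ fun d => by rw [mul_comm])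

theorem quadratic_mul_transpose (M N : Matrix ι ι R) :
    quadratic p (N * Mᵀ) = ∑ c, ∑ d, N c d • (p c * ∑ a, M a d • p a) := by
  simp only [quadratic_apply, Matrix.mul_apply, Finset.mul_sum, Finset.smul_sum,
    Finset.sum_smul, mul_smul_comm, smul_smul, Matrix.transpose_apply]
  exact Fintype.sum_congr _ _ fun c => Finset.sum_comm

theorem quadratic_blockDiagonal {o : Type*} [Fintype o] [DecidableEq o] (p : ι × o → A)
    (S : Matrix ι ι R) :
    quadratic p (Matrix.blockDiagonal fun _ => S) = ∑ k, quadratic (fun a => p (a, k)) S := by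
  simp only [quadratic_apply, Fintype.sum_prod_type, Matrix.blockDiagonal_apply, ite_smul,
    zero_smul, Finset.sum_ite_eq, Finset.mem_univ, if_true]
  rw [Finset.sum_comm]

theorem quadratic_single [DecidableEq ι] (a b : ι) (r : R) :
    quadratic p (Matrix.single a b r) = r • (p a * p b) := by
  simp [quadratic_apply, Matrix.single_apply, ite_and]

variable {p}

theorem quadratic_single_add_single [DecidableEq ι] {a b : ι} {c : R}
    (h : ⁅p a, p b⁆ = c • (1 : A)) :
    quadratic p (Matrix.single a b (1 : R) + Matrix.single b a 1)
      = (2 : R) • (p a * p b) - c • 1 := by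
  rw [map_add, quadratic_single, quadratic_single, one_smul, one_smul, two_smul, ← h,
    Ring.lie_def]
  abel

end Quadratic

variable {p : ι → A} {ω : Matrix ι ι R}

theorem quadratic_lie (hp : ∀ a b, ⁅p a, p b⁆ = ω a b • (1 : A)) {S : Matrix ι ι R}
    (hS : S.IsSymm) (c : ι) :
    ⁅quadratic p S, p c⁆ = ∑ a, ((2 : R) • (S * ω)) a c • p a := by
  simp only [quadratic_apply, sum_lie, smul_lie, Ring.mul_lie, hp, mul_smul_one, smul_one_mul]
  have expand : ∀ a, (S * ω) a c • p a = ∑ b, (S a b * ω b c) • p a := fun a => by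
    rw [Matrix.mul_apply, Finset.sum_smul]
  simp only [two_smul, Matrix.add_apply, add_smul, Finset.sum_add_distrib, expand, smul_add,
    smul_smul]
  congr 1
  rw [Finset.sum_comm]
  exact Fintype.sum_congr _ _ fun a => Fintype.sum_congr _ _ fun b => by rw [hS.apply a b]

theorem quadratic_lie_quadratic (hp : ∀ a b, ⁅p a, p b⁆ = ω a b • (1 : A))
    {S : Matrix ι ι R} (hS : S.IsSymm) (S' : Matrix ι ι R) :
    ⁅quadratic p S, quadratic p S'⁆
      = (2 : R) • quadratic p (S * ω * S' + S' * ωᵀ * S) := by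
  have hS' : S' * ωᵀ * S = S' * (S * ω)ᵀ := by
    rw [Matrix.transpose_mul, hS.eq, Matrix.mul_assoc]
  calc ⁅quadratic p S, quadratic p S'⁆
      = ∑ c, ∑ d,
          S' c d • (⁅quadratic p S, p c⁆ * p d + p c * ⁅quadratic p S, p d⁆) := by
        simp only [quadratic_apply p S', lie_sum]
        exact Fintype.sum_congr _ _ fun c => Fintype.sum_congr _ _ fun d =>
          (lie_smul (S' c d) _ (p c * p d)).trans (by rw [Ring.lie_mul])
    _ = quadratic p ((2 : R) • (S * ω) * S') + quadratic p (S' * ((2 : R) • (S * ω))ᵀ) := by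
        rw [quadratic_mul, quadratic_mul_transpose]
        simp only [quadratic_lie hp hS, smul_add, Finset.sum_add_distrib]
    _ = (2 : R) • quadratic p (S * ω * S' + S' * ωᵀ * S) := by
        rw [hS', Matrix.transpose_smul, Matrix.smul_mul, Matrix.mul_smul, map_smul, map_smul,
          map_add, smul_add]

variable [DecidableEq ι]

theorem isSymm_mul_transpose_of_mem (hω : ω * ω = -1) (hωT : ωᵀ = -ω) {ξ : Matrix ι ι R}
    (hξ : ξ ∈ skewAdjointMatricesSubmodule ω) : (ξ * ωᵀ).IsSymm := by
  have hξ' : ξᵀ * ω = ω * -ξ := (mem_skewAdjointMatricesSubmodule ω ξ).mp hξ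
  have hωωT : ω * ωᵀ = 1 := by rw [hωT, Matrix.mul_neg, hω, neg_neg]
  calc (ξ * ωᵀ)ᵀ = ω * (ξᵀ * ω * ωᵀ) := by
        rw [Matrix.mul_assoc ξᵀ, hωωT, Matrix.mul_one, Matrix.transpose_mul,
          Matrix.transpose_transpose]
    _ = ξ * ωᵀ := by
        rw [hξ', ← Matrix.mul_assoc, ← Matrix.mul_assoc, hω]; simp

variable [Invertible (2 : R)]

def oscillatorRep (hω : ω * ω = -1) (hωT : ωᵀ = -ω)
    (hp : ∀ a b, ⁅p a, p b⁆ = ω a b • (1 : A)) :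
    skewAdjointMatricesLieSubalgebra ω →ₗ⁅R⁆ A where
  toFun ξ := ⅟(2 : R) • quadratic p ((ξ : Matrix ι ι R) * ωᵀ)
  map_add' ξ η := by simp only [AddMemClass.coe_add, Matrix.add_mul, map_add, smul_add]
  map_smul' r ξ := by
    simp only [SetLike.val_smul, Matrix.smul_mul, map_smul, RingHom.id_apply, smul_comm r]
  map_lie' {ξ η} := by
    have hωω : ∀ X : Matrix ι ι R, ω * (ω * X) = -X := fun X => by
      rw [← Matrix.mul_assoc, hω, Matrix.neg_mul, Matrix.one_mul]
    have key : (ξ : Matrix ι ι R) * ωᵀ * ω * (η * ωᵀ) + η * ωᵀ * ωᵀ * (ξ * ωᵀ)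
        = (ξ * η - η * ξ) * ωᵀ := by
      rw [hωT]
      simp only [Matrix.neg_mul, Matrix.mul_neg, neg_neg, Matrix.mul_assoc, hωω, Matrix.sub_mul]
      abel
    calc ⅟(2 : R) • quadratic p (((⁅ξ, η⁆ : skewAdjointMatricesLieSubalgebra ω) :
            Matrix ι ι R) * ωᵀ)
        = ⅟(2 : R) • ⅟(2 : R) •
            ⁅quadratic p ((ξ : Matrix ι ι R) * ωᵀ),
              quadratic p ((η : Matrix ι ι R) * ωᵀ)⁆ := by
          rw [quadratic_lie_quadratic hp (isSymm_mul_transpose_of_mem hω hωT ξ.2), key,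
            invOf_smul_smul, LieSubalgebra.coe_bracket, Ring.lie_def]
      _ = ⁅⅟(2 : R) • quadratic p ((ξ : Matrix ι ι R) * ωᵀ),
            ⅟(2 : R) • quadratic p ((η : Matrix ι ι R) * ωᵀ)⁆ := by
          rw [smul_lie]; congr 1; exact (lie_smul (⅟(2 : R)) _ _).symm

theorem oscillatorRep_apply (hω : ω * ω = -1) (hωT : ωᵀ = -ω)
    (hp : ∀ a b, ⁅p a, p b⁆ = ω a b • (1 : A)) (ξ : skewAdjointMatricesLieSubalgebra ω) :
    oscillatorRep hω hωT hp ξ = ⅟(2 : R) • quadratic p ((ξ : Matrix ι ι R) * ωᵀ) :=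
  rfl

end WeylAlgebra

namespace Matrix

variable {R ι o : Type*} [CommRing R] [DecidableEq o]

theorem blockDiagonal_const_transpose {J : Matrix ι ι R} (hJ : Jᵀ = -J) :
    (blockDiagonal fun _ : o => J)ᵀ = -blockDiagonal fun _ => J := by
  rw [blockDiagonal_transpose, hJ]
  exact blockDiagonal_neg fun _ => J

variable [Fintype ι] [DecidableEq ι] [Fintype o]

theorem blockDiagonal_const_mul_self {J : Matrix ι ι R} (hJ : J * J = -1) :
    (blockDiagonal fun _ : o => J) * blockDiagonal (fun _ => J) = -1 := by
  rw [← blockDiagonal_mul, hJ]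
  exact (blockDiagonal_neg (1 : o → Matrix ι ι R)).trans (by rw [blockDiagonal_one])

variable (o) in
def blockDiagonalLieHom (J : Matrix ι ι R) :
    skewAdjointMatricesLieSubalgebra J →ₗ⁅R⁆
      skewAdjointMatricesLieSubalgebra (blockDiagonal fun _ : o => J) where
  toFun ξ := ⟨blockDiagonal fun _ => (ξ : Matrix ι ι R), by
    have hξ : (ξ : Matrix ι ι R)ᵀ * J = J * -ξ :=
      (mem_skewAdjointMatricesSubmodule J _).mp ξ.2
    rw [mem_skewAdjointMatricesLieSubalgebra, mem_skewAdjointMatricesSubmodule]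
    change _ * _ = _ * _
    rw [blockDiagonal_transpose, ← blockDiagonal_neg, ← blockDiagonal_mul,
      ← blockDiagonal_mul]
    simp only [Pi.neg_apply, hξ]⟩
  map_add' ξ η := Subtype.ext (blockDiagonal_add (fun _ => (ξ : Matrix ι ι R)) fun _ => η)
  map_smul' r ξ := Subtype.ext (blockDiagonal_smul r fun _ => (ξ : Matrix ι ι R))
  map_lie' {ξ η} := Subtype.ext <| by
    simp only [LieSubalgebra.coe_bracket, Ring.lie_def, ← blockDiagonal_mul,
      ← blockDiagonal_sub]
    rfl

variable {l : Type*} [DecidableEq l] [Fintype l]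

theorem single_inl_mul_J (a : l ⊕ l) (k : l) (c : R) :
    single a (Sum.inl k) c * J l R = -single a (Sum.inr k) c := by
  ext u (v | v) <;> by_cases hu : u = a <;> simp [J, hu, eq_comm (a := a), single_apply, one_apply]

theorem single_inr_mul_J (a : l ⊕ l) (k : l) (c : R) :
    single a (Sum.inr k) c * J l R = single a (Sum.inl k) c := by
  ext u (v | v) <;> by_cases hu : u = a <;> simp [J, hu, eq_comm (a := a), single_apply, one_apply]

end Matrix

theorem MvPolynomial.pderiv_pderiv_comm {σ R : Type*} [CommSemiring R] [DecidableEq σ]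
    (a b : σ) (f : MvPolynomial σ R) : pderiv a (pderiv b f) = pderiv b (pderiv a f) := by
  induction f using MvPolynomial.induction_on with
  | C c => simp
  | add p q hp hq => simp [hp, hq]
  | mul_X p s hp =>
      simp only [pderiv_mul, map_add, pderiv_X, Pi.single_apply, apply_ite (pderiv a),
        apply_ite (pderiv b), map_zero, hp, mul_ite, mul_one, mul_zero]
      split_ifs <;> ring

open MvPolynomial WeylAlgebra

variable {n m : ℕ}

theorem xOp_lie_xOp (i i' : Fin n) (j k : Fin m) : ⁅xOp i j, xOp i' k⁆ = 0 := by
  refine LinearMap.ext fun f => ?_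
  change X (i, j) * (X (i', k) * f) - X (i', k) * (X (i, j) * f) = 0
  ring

theorem dOp_lie_dOp (i i' : Fin n) (j k : Fin m) : ⁅dOp i j, dOp i' k⁆ = 0 := by
  refine LinearMap.ext fun f => ?_
  change pderiv (i, j) (pderiv (i', k) f) - pderiv (i', k) (pderiv (i, j) f) = 0
  rw [pderiv_pderiv_comm, sub_self]

theorem dOp_lie_xOp (i i' : Fin n) (j k : Fin m) :
    ⁅dOp i j, xOp i' k⁆ = (if i = i' ∧ j = k then (1 : ℂ) else 0) • 1 := by
  refine LinearMap.ext fun f => ?_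
  change pderiv (i, j) (X (i', k) * f) - X (i', k) * pderiv (i, j) f = _
  rw [pderiv_mul, pderiv_X, add_sub_cancel_right]
  by_cases h : i = i' ∧ j = k
  · obtain ⟨rfl, rfl⟩ := h; simp
  · rw [Pi.single_eq_of_ne' (by simpa [Prod.ext_iff] using h)]; simp [h]

abbrev symplecticForm (m : ℕ) : Matrix (Fin m ⊕ Fin m) (Fin m ⊕ Fin m) ℂ :=
  fromBlocks 0 1 (-1) 0

theorem symplecticForm_eq_neg_J : symplecticForm m = -J (Fin m) ℂ := by
  simp [J, fromBlocks_neg]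

theorem symplecticForm_transpose : (symplecticForm m)ᵀ = -symplecticForm m := by
  rw [symplecticForm_eq_neg_J, transpose_neg, J_transpose]

theorem symplecticForm_mul_self : symplecticForm m * symplecticForm m = -1 := by
  rw [symplecticForm_eq_neg_J, neg_mul_neg, J_squared]

-- With `-∂` rather than `∂`, the commutators are given by the form defining `spLie`,
-- which is what makes `tau` take the values prescribed for `τ'`.
def weylGen (i : Fin n) : Fin m ⊕ Fin m → Module.End ℂ (WP n m) :=
  Sum.elim (xOp i) (-dOp i)

theorem weylGen_lie_weylGen (i i' : Fin n) (a b : Fin m ⊕ Fin m) :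
    ⁅weylGen i a, weylGen i' b⁆ = (if i = i' then symplecticForm m a b else 0) • 1 := by
  rcases a with j | j <;> rcases b with k | k
  · simp [weylGen, xOp_lie_xOp]
  · simp only [weylGen, Sum.elim_inl, Sum.elim_inr, Pi.neg_apply]
    rw [lie_neg, ← lie_skew, neg_neg, dOp_lie_xOp]
    by_cases hi : i = i' <;> by_cases hjk : j = k <;>
      simp [hi, hjk, one_apply, eq_comm (a := i'), eq_comm (a := k)]
  · simp only [weylGen, Sum.elim_inl, Sum.elim_inr, Pi.neg_apply]
    rw [neg_lie, dOp_lie_xOp]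
    by_cases hi : i = i' <;> by_cases hjk : j = k <;> simp [hi, hjk, one_apply]
    exact (neg_one_smul ℂ _).symm
  · simp [weylGen, dOp_lie_dOp]

theorem weylGen_lie_weylGen_eq_blockDiagonal (a b : (Fin m ⊕ Fin m) × Fin n) :
    ⁅weylGen a.2 a.1, weylGen b.2 b.1⁆
      = (blockDiagonal fun _ => symplecticForm m) a b • 1 := by
  rw [weylGen_lie_weylGen, blockDiagonal_apply]

def tau (n m : ℕ) : spLie m →ₗ⁅ℂ⁆ Module.End ℂ (WP n m) :=
  (oscillatorRep (blockDiagonal_const_mul_self symplecticForm_mul_self)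
    (blockDiagonal_const_transpose symplecticForm_transpose)
    weylGen_lie_weylGen_eq_blockDiagonal).comp (blockDiagonalLieHom (Fin n) (symplecticForm m))

theorem tau_apply (ξ : spLie m) :
    tau n m ξ = ⅟(2 : ℂ) •
      ∑ i, quadratic (weylGen i)
        ((ξ : Matrix (Fin m ⊕ Fin m) (Fin m ⊕ Fin m) ℂ) * J (Fin m) ℂ) := by
  rw [tau, LieHom.comp_apply, oscillatorRep_apply]
  change ⅟2 • quadratic _
    (blockDiagonal (fun _ => (ξ : Matrix (Fin m ⊕ Fin m) (Fin m ⊕ Fin m) ℂ)) * _) = _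
  rw [blockDiagonal_transpose, ← blockDiagonal_mul, quadratic_blockDiagonal,
    symplecticForm_eq_neg_J, transpose_neg, J_transpose, neg_neg]

theorem quadratic_weylGen_single_add_single (i : Fin n) (a b : Fin m ⊕ Fin m) :
    quadratic (weylGen i) (single a b (1 : ℂ) + single b a 1)
      = (2 : ℂ) • (weylGen i a * weylGen i b) - symplecticForm m a b • 1 :=
  quadratic_single_add_single (by rw [weylGen_lie_weylGen, if_pos rfl])

theorem weylGen_inr_mul_weylGen_inr (i : Fin n) (j k : Fin m) :
    weylGen i (Sum.inr j) * weylGen i (Sum.inr k) = dOp i j * dOp i k :=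
  LinearMap.ext fun _ => by simp [weylGen]

theorem weylGen_inl_mul_weylGen_inr (i : Fin n) (j k : Fin m) :
    weylGen i (Sum.inl j) * weylGen i (Sum.inr k) = -(xOp i j * dOp i k) :=
  LinearMap.ext fun _ => map_neg (xOp i j) _

theorem invOf_two_smul_sum_two_smul_sub {M : Type*} [AddCommGroup M] [Module ℂ M]
    (X : Fin n → Module.End ℂ M) (c : ℂ) :
    ⅟(2 : ℂ) • ∑ i, ((2 : ℂ) • X i - c • 1)
      = ∑ i, X i - ((n : ℂ) * c / 2) • 1 := by
  rw [Finset.sum_sub_distrib, ← Finset.smul_sum, Finset.sum_const, Finset.card_univ,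
    Fintype.card_fin, smul_sub, invOf_smul_smul, ← Nat.cast_smul_eq_nsmul ℂ, smul_smul,
    smul_smul, invOf_eq_inv]
  congr 2
  ring

variable {j k : Fin m} {ξ : spLie m}

theorem tau_eq_Mop
    (h : (ξ : Matrix (Fin m ⊕ Fin m) (Fin m ⊕ Fin m) ℂ)
      = single (Sum.inl j) (Sum.inr k) 1 + single (Sum.inl k) (Sum.inr j) 1) :
    tau n m ξ = Mop n m j k := by
  rw [tau_apply, h, add_mul, single_inr_mul_J, single_inr_mul_J]
  simp only [quadratic_weylGen_single_add_single, invOf_two_smul_sum_two_smul_sub]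
  simp only [symplecticForm, fromBlocks_apply₁₁, Matrix.zero_apply, mul_zero, zero_div,
    zero_smul, sub_zero]
  rfl

theorem tau_eq_Δop
    (h : (ξ : Matrix (Fin m ⊕ Fin m) (Fin m ⊕ Fin m) ℂ)
      = -single (Sum.inr j) (Sum.inl k) 1 - single (Sum.inr k) (Sum.inl j) 1) :
    tau n m ξ = Δop n m j k := by
  rw [tau_apply, h, sub_mul, neg_mul, single_inl_mul_J, single_inl_mul_J, neg_neg,
    sub_neg_eq_add]
  simp only [quadratic_weylGen_single_add_single, invOf_two_smul_sum_two_smul_sub]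
  simp only [weylGen_inr_mul_weylGen_inr, symplecticForm, fromBlocks_apply₂₂, Matrix.zero_apply,
    mul_zero, zero_div, zero_smul, sub_zero]
  rfl

theorem tau_eq_Eop_add
    (h : (ξ : Matrix (Fin m ⊕ Fin m) (Fin m ⊕ Fin m) ℂ)
      = single (Sum.inl j) (Sum.inl k) 1 - single (Sum.inr k) (Sum.inr j) 1) :
    tau n m ξ = Eop n m j k + (if j = k then ((n : ℂ) / 2) else 0) • 1 := by
  rw [tau_apply, h, sub_mul, single_inl_mul_J, single_inr_mul_J, sub_eq_add_neg, ← neg_add]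
  simp only [map_neg, quadratic_weylGen_single_add_single, Finset.sum_neg_distrib, smul_neg,
    invOf_two_smul_sum_two_smul_sub]
  have hω : symplecticForm m (Sum.inl j) (Sum.inr k) = if j = k then 1 else 0 := by
    simp [symplecticForm, one_apply]
  have hE : ∑ i, weylGen i (Sum.inl j) * weylGen i (Sum.inr k) = -Eop n m j k := by
    simp only [weylGen_inl_mul_weylGen_inr, Finset.sum_neg_distrib, Eop]
  rw [hω, hE, neg_sub, sub_neg_eq_add, add_comm]
  split_ifs <;> simp

/-- The map `τ' : 𝔰𝔭_{2m} → D(V)` determined by `e_{j,k+m} + e_{k,j+m} ↦ M_{j,k}`,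
`-e_{j+m,k} - e_{k+m,j} ↦ Δ_{j,k}`, `e_{j,k} - e_{m+k,m+j} ↦ E_{j,k} + (n/2)δ_{j,k}`
is a Lie algebra homomorphism. -/
theorem stmt4 (n m : ℕ) :
    ∃ τ' : spLie m →ₗ⁅ℂ⁆ Module.End ℂ (WP n m),
      ∀ (j k : Fin m) (ξ : spLie m),
        ((ξ : Matrix (Fin m ⊕ Fin m) (Fin m ⊕ Fin m) ℂ)
            = Matrix.single (Sum.inl j) (Sum.inr k) 1 + Matrix.single (Sum.inl k) (Sum.inr j) 1
            → τ' ξ = Mop n m j k)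
        ∧ ((ξ : Matrix (Fin m ⊕ Fin m) (Fin m ⊕ Fin m) ℂ)
            = -Matrix.single (Sum.inr j) (Sum.inl k) 1 - Matrix.single (Sum.inr k) (Sum.inl j) 1
            → τ' ξ = Δop n m j k)
        ∧ ((ξ : Matrix (Fin m ⊕ Fin m) (Fin m ⊕ Fin m) ℂ)
            = Matrix.single (Sum.inl j) (Sum.inl k) 1 - Matrix.single (Sum.inr k) (Sum.inr j) 1
            → τ' ξ = Eop n m j k + (if j = k then ((n : ℂ) / 2) else 0) • 1) := by
  exact ⟨tau n m, fun _ _ _ => ⟨tau_eq_Mop, tau_eq_Δop, tau_eq_Eop_add⟩⟩
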